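/- arXiv:1007.0906 — 2 statements merged into one kernel-verified Lean document; each statement's English description precedes it below -/
import Mathlib

section
/- Let C be a set of real n×n matrices closed under multiplication by nonnegative scalars. Suppose that O₁ is the maximum (attained) of 𝟏ᵀA𝟏 over all positive semidefinite A ∈ C with tr A = 1, that O₂ is the maximum (attained) of tr A over all symmetric A ∈ C for which R(A) is positive semidefinite, and that the first maximum is attained by some matrix A with diag(A) = c·(A·𝟏) for some real c. Then O₁ = O₂. -/
open Matrix

/-- For a real `n×n` matrix `A` with diagonal vector `a = diag(A)`, the bordered matrix
`R(A) = [[1, aᵀ],[a, A]]`. -/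
def Rmat {n : ℕ} (A : Matrix (Fin n) (Fin n) ℝ) :
    Matrix (Fin 1 ⊕ Fin n) (Fin 1 ⊕ Fin n) ℝ :=
  Matrix.fromBlocks
    (Matrix.of fun _ _ => (1 : ℝ))
    (Matrix.of fun _ j => A.diag j)
    (Matrix.of fun i _ => A.diag i)
    A

/-!
By the Schur complement of the `1×1` corner, `R(B) ⪰ 0` iff `B - diag(B) diag(B)ᵀ ⪰ 0`.
Hence `B ⪰ 0` and `(tr B)² ≤ 𝟏ᵀB𝟏`, so `B / tr B` is feasible for the first problem with value
at least `tr B`: `O₂ ≤ O₁`. Conversely, for the optimal `A` with `diag A = c·A𝟏`, `tr A = 1` forces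
`c·O₁ = 1`, so `O₁A` has diagonal `A𝟏`; and `O₁A - (A𝟏)(A𝟏)ᵀ ⪰ 0` is the Cauchy–Schwarz inequality
for the form `A`. Thus `O₁A` is feasible for the second problem with trace `O₁`: `O₁ ≤ O₂`.
-/

namespace Matrix

variable {ι : Type*} [Fintype ι]

lemma PosSemidef.dotProduct_mulVec_sq_le {A : Matrix ι ι ℝ} (hA : A.PosSemidef) (x y : ι → ℝ) :
    (x ⬝ᵥ A *ᵥ y) ^ 2 ≤ (x ⬝ᵥ A *ᵥ x) * (y ⬝ᵥ A *ᵥ y) := by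
  classical
  have hsymm : LinearMap.IsSymm (toBilin' A) := LinearMap.BilinForm.isSymm_iff.mp <|
    isSymm_toBilin'_iff_isSymm.mpr (isHermitian_iff_isSymm.mp hA.isHermitian)
  have hnonneg (v : ι → ℝ) : 0 ≤ toBilin' A v v := by
    simpa [toBilin'_apply'] using hA.dotProduct_mulVec_nonneg v
  simpa only [toBilin'_apply'] using (toBilin' A).apply_sq_le_of_symm hnonneg hsymm x y

lemma PosSemidef.smul_sub_vecMulVec_mulVec {A : Matrix ι ι ℝ} (hA : A.PosSemidef) (v : ι → ℝ) :
    ((v ⬝ᵥ A *ᵥ v) • A - vecMulVec (A *ᵥ v) (A *ᵥ v)).PosSemidef := by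
  have hA' : Aᵀ = A := isHermitian_iff_isSymm.mp hA.isHermitian
  refine .of_dotProduct_mulVec_nonneg ?_ fun y => ?_
  · rw [isHermitian_iff_isSymm, IsSymm, transpose_sub, transpose_smul, hA', transpose_vecMulVec]
  · have hyv : y ⬝ᵥ A *ᵥ v = v ⬝ᵥ A *ᵥ y := by rw [← dotProduct_transpose_mulVec, hA']
    simp only [star_trivial, sub_mulVec, smul_mulVec, vecMulVec_mulVec, dotProduct_sub,
      dotProduct_smul, dotProduct_comm (A *ᵥ v) y, hyv, smul_eq_mul, op_smul_eq_smul]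
    nlinarith [hA.dotProduct_mulVec_sq_le v y]

lemma sum_sum_eq_one_dotProduct_mulVec_one (A : Matrix ι ι ℝ) :
    ∑ i, ∑ j, A i j = 1 ⬝ᵥ A *ᵥ 1 := by
  simp [dotProduct, mulVec]

end Matrix

section

variable {n : ℕ}

lemma posSemidef_Rmat_iff (B : Matrix (Fin n) (Fin n) ℝ) :
    (Rmat B).PosSemidef ↔ (B - vecMulVec B.diag B.diag).PosSemidef := by
  have h1 : (of fun _ _ => (1 : ℝ) : Matrix (Fin 1) (Fin 1) ℝ) = 1 := by
    ext i j; fin_cases i; fin_cases j; rfl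
  have h2 : (of fun i (_ : Fin 1) => B.diag i) = (of fun (_ : Fin 1) j => B.diag j)ᴴ := by
    ext i j; simp
  let : Invertible (1 : Matrix (Fin 1) (Fin 1) ℝ) := invertibleOne
  rw [Rmat, h1, h2, PosDef.fromBlocks₁₁ _ _ PosDef.one]
  congr!
  ext i j; simp [vecMulVec, mul_apply]

lemma posSemidef_of_posSemidef_Rmat {B : Matrix (Fin n) (Fin n) ℝ} (h : (Rmat B).PosSemidef) :
    B.PosSemidef :=
  h.submatrix Sum.inr

lemma trace_sq_le_sum_of_posSemidef_Rmat {B : Matrix (Fin n) (Fin n) ℝ}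
    (h : (Rmat B).PosSemidef) : B.trace ^ 2 ≤ ∑ i, ∑ j, B i j := by
  have h1 := ((posSemidef_Rmat_iff B).mp h).dotProduct_mulVec_nonneg 1
  simp only [star_trivial, sub_mulVec, vecMulVec_mulVec, dotProduct_sub, op_smul_eq_smul,
    dotProduct_smul, smul_eq_mul] at h1
  rw [dotProduct_comm 1 B.diag] at h1
  rw [sum_sum_eq_one_dotProduct_mulVec_one, trace, ← dotProduct_one, sq]
  linarith

lemma trace_le_sum_inv_trace_smul_of_posSemidef_Rmat {B : Matrix (Fin n) (Fin n) ℝ}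
    (h : (Rmat B).PosSemidef) (htr : 0 < B.trace) :
    B.trace ≤ ∑ i, ∑ j, (B.trace⁻¹ • B) i j := by
  simp only [Matrix.smul_apply, smul_eq_mul, ← Finset.mul_sum]
  rw [le_inv_mul_iff₀ htr, ← sq]
  exact trace_sq_le_sum_of_posSemidef_Rmat h

lemma posSemidef_Rmat_smul_of_diag_eq_smul_mulVec {A : Matrix (Fin n) (Fin n) ℝ}
    (hA : A.PosSemidef) (htr : A.trace = 1) {c : ℝ} (hdiag : A.diag = c • (A *ᵥ 1)) :
    (Rmat ((1 ⬝ᵥ A *ᵥ 1) • A)).PosSemidef := by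
  have hc : c * (1 ⬝ᵥ A *ᵥ 1) = 1 := by
    rw [← htr, trace, ← dotProduct_one, hdiag, smul_dotProduct, dotProduct_comm, smul_eq_mul]
  have hdiag' : ((1 ⬝ᵥ A *ᵥ 1) • A).diag = A *ᵥ 1 := by
    rw [diag_smul, hdiag, smul_smul, mul_comm, hc, one_smul]
  rw [posSemidef_Rmat_iff, hdiag']
  exact hA.smul_sub_vecMulVec_mulVec 1

end

/-- let `C` be a cone of real `n×n` matrices, let
`O₁ = max { 𝟙ᵀA𝟙 : A ∈ C, A ⪰ 0, tr A = 1 }` and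
`O₂ = max { tr A : A ∈ C, A symmetric, R(A) ⪰ 0 }` (both attained), and suppose the first
maximum is attained by some `A` with `diag(A) = c·(A𝟙)`. Then `O₁ = O₂`. -/
theorem statement6 (n : ℕ) (C : Set (Matrix (Fin n) (Fin n) ℝ))
    (hcone : ∀ c : ℝ, 0 ≤ c → ∀ A ∈ C, c • A ∈ C)
    (O₁ O₂ : ℝ)
    (hO₁ : IsGreatest {y | ∃ A ∈ C, A.PosSemidef ∧ A.trace = 1 ∧ y = ∑ i, ∑ j, A i j} O₁)
    (hO₂ : IsGreatest {y | ∃ A ∈ C, A.IsSymm ∧ (Rmat A).PosSemidef ∧ y = A.trace} O₂)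
    (hattain : ∃ A ∈ C, A.PosSemidef ∧ A.trace = 1 ∧ (∑ i, ∑ j, A i j) = O₁ ∧
      ∃ c : ℝ, A.diag = c • (A *ᵥ fun _ => (1 : ℝ))) :
    O₁ = O₂ := by
  obtain ⟨A, hAC, hA, htr, hsum, c, hdiag⟩ := hattain
  rw [sum_sum_eq_one_dotProduct_mulVec_one] at hsum
  have hO₁_nonneg : 0 ≤ O₁ := hsum ▸ by simpa using hA.dotProduct_mulVec_nonneg 1
  refine le_antisymm (hO₂.2 ⟨O₁ • A, hcone _ hO₁_nonneg _ hAC, ?_, ?_, ?_⟩) ?_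
  · exact isHermitian_iff_isSymm.mp (hA.smul hO₁_nonneg).isHermitian
  · exact hsum ▸ posSemidef_Rmat_smul_of_diag_eq_smul_mulVec hA htr hdiag
  · rw [trace_smul, htr, smul_eq_mul, mul_one]
  · obtain ⟨B, hBC, -, hR, rfl⟩ := hO₂.1
    rcases le_or_gt B.trace 0 with htr | htr
    · linarith
    · calc B.trace ≤ ∑ i, ∑ j, (B.trace⁻¹ • B) i j :=
            trace_le_sum_inv_trace_smul_of_posSemidef_Rmat hR htr
        _ ≤ O₁ := hO₁.2 ⟨_, hcone _ (inv_nonneg.2 htr.le) B hBC,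
            (posSemidef_of_posSemidef_Rmat hR).smul (inv_nonneg.2 htr.le),
            by rw [trace_smul, smul_eq_mul, inv_mul_cancel₀ htr.ne'], rfl⟩
end

section
/- Fix an integer n ≥ 1, let 𝒫 be the collection of subsets of {1,…,n}, for integers i,j,t let M_{i,j}^t be the real 𝒫×𝒫 matrix with (X,Y) entry 1 if |X| = i, |Y| = j, |X∩Y| = t and 0 otherwise, and for 0 ≤ k ≤ ⌊n/2⌋ let L_k := {b ∈ ℝ^{𝒫} : M_{k−1,k}^{k−1}·b = 0 and b_X = 0 whenever |X| ≠ k}. Define β_{i,j,k}^t := C(n−2k, i−k) · Σ_{p=0}^{t} (−1)^{k−p} C(k,p) C(i−p, t−p) C(n+p−i−k, n+t−i−j). Then for all i, j, k, t ∈ {0,…,n} with k ≤ ⌊n/2⌋ and every b ∈ L_k: C(n−2k, i−k) · M_{i,j}^t · M_{j,k}^k · b = β_{i,j,k}^t · M_{i,k}^k · b. -/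
open Matrix

/-- Real-valued binomial coefficient `C(a,b)` of integers, equal to `0` whenever `b < 0` or
`b > a`. -/
noncomputable def zchoose (a b : ℤ) : ℝ :=
  if 0 ≤ b ∧ b ≤ a then ((a.toNat).choose b.toNat : ℝ) else 0

/-- The matrix `M_{i,j}^t`, indexed by the subsets of `{1,…,n}`, with `(X,Y)` entry `1` iff
`|X| = i`, `|Y| = j` and `|X ∩ Y| = t`. -/
def Mmat (n : ℕ) (i j t : ℤ) : Matrix (Finset (Fin n)) (Finset (Fin n)) ℝ :=
  Matrix.of fun X Y =>
    if (X.card : ℤ) = i ∧ (Y.card : ℤ) = j ∧ ((X ∩ Y).card : ℤ) = t then 1 else 0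

/-- The set `L_k = {b ∈ ℝ^𝒫 : M_{k−1,k}^{k−1}·b = 0, b_X = 0 whenever |X| ≠ k}`. -/
def Lset (n k : ℕ) : Set (Finset (Fin n) → ℝ) :=
  {b | Mmat n ((k : ℤ) - 1) (k : ℤ) ((k : ℤ) - 1) *ᵥ b = 0 ∧
       ∀ X : Finset (Fin n), X.card ≠ k → b X = 0}

/-- `β_{i,j,k}^t = C(n−2k, i−k) · Σ_{p=0}^{t} (−1)^{k−p} C(k,p) C(i−p, t−p)
C(n+p−i−k, n+t−i−j)`, binomial coefficients being zero in degenerate ranges. -/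
noncomputable def betaCoef (n i j k t : ℕ) : ℝ :=
  zchoose ((n : ℤ) - 2 * k) ((i : ℤ) - k) *
    ∑ p ∈ Finset.range (t + 1),
      (-1 : ℝ) ^ ((k : ℤ) - (p : ℤ)) * zchoose (k : ℤ) (p : ℤ) *
        zchoose ((i : ℤ) - p) ((t : ℤ) - p) *
        zchoose ((n : ℤ) + p - i - k) ((n : ℤ) + t - i - j)

/-!
Fix `X` with `|X| = i` and let `F(s)` be the sum of `b` over the `k`-sets `Z` with `|X ∩ Z| = s`.
For such `Z`, the `(X, Z)` entry of `M_{i,j}^t M_{j,k}^k` counts the `j`-sets `Y ⊇ Z` with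
`|X ∩ Y| = t`: the set `Y \ Z` consists of `t - s` points of `X \ Z` and `j - k - t + s` points
outside `X ∪ Z`, so the entry is `C(i-s, t-s) C(n-i-k+s, j-k-t+s)` and the `X` entry of the left
side is a combination of the `F(s)`. Counting in the same way, the `X` entry of
`M_{i,k-1}^r M_{k-1,k}^{k-1} b = 0` reads `(k-r) F(r) + (r+1) F(r+1) = 0`: a `k`-set `Z` with
`|X ∩ Z| = s` has `k - s` subsets of size `k - 1` meeting `X` in `s` points and `s` meeting it in
`s - 1` points. Hence `F(s) = (-1)^(k-s) C(k,s) F(k)`, and `F(k)` is the `X` entry of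
`M_{i,k}^k b`.
-/

open Finset

lemma zchoose_natCast (a b : ℕ) : zchoose a b = a.choose b := by
  unfold zchoose
  split_ifs with h
  · simp
  · rw [Nat.choose_eq_zero_of_lt (by omega), Nat.cast_zero]

lemma zchoose_sub (a b : ℤ) : zchoose a (a - b) = zchoose a b := by
  unfold zchoose
  by_cases h : 0 ≤ b ∧ b ≤ a
  · rw [if_pos (by omega), if_pos h, show (a - b).toNat = a.toNat - b.toNat by omega,
      Nat.choose_symm (by omega)]
  · rw [if_neg (by omega), if_neg h]

lemma zchoose_of_neg {a b : ℤ} (h : b < 0) : zchoose a b = 0 := by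
  unfold zchoose; rw [if_neg (by omega)]

section Counting

variable {α : Type*} [DecidableEq α]

lemma card_inter_eq_card_right_iff {Y Z : Finset α} : #(Y ∩ Z) = #Z ↔ Z ⊆ Y := by
  rw [← inter_eq_right, ← eq_iff_card_le_of_subset inter_subset_right]
  have := card_le_card (inter_subset_right (s₁ := Y) (s₂ := Z))
  omega

lemma card_filter_powerset_card_inter_card_sdiff (U X : Finset α) (c d : ℕ) :
    #{A ∈ U.powerset | #(A ∩ X) = c ∧ #(A \ X) = d}
      = (#(U ∩ X)).choose c * (#(U \ X)).choose d := by
  rw [← card_powersetCard, ← card_powersetCard, ← card_product]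
  refine card_nbij' (fun A => (A ∩ X, A \ X)) (fun p => p.1 ∪ p.2) ?_ ?_ ?_ ?_
  · intro A hA
    simp only [coe_filter, mem_powerset] at hA
    simp only [coe_product, Set.mem_prod, mem_coe, mem_powersetCard]
    exact ⟨⟨inter_subset_inter_right hA.1, hA.2.1⟩, sdiff_subset_sdiff hA.1 subset_rfl, hA.2.2⟩
  · rintro ⟨B, C⟩ h
    simp only [coe_product, Set.mem_prod, mem_coe, mem_powersetCard, subset_iff, mem_inter,
      mem_sdiff] at h
    have hB : (B ∪ C) ∩ X = B := by ext x; grind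
    have hC : (B ∪ C) \ X = C := by ext x; grind
    simp only [coe_filter, mem_powerset, Set.mem_ofPred, hB, hC]
    exact ⟨union_subset (fun x hx => (h.1.1 hx).1) (fun x hx => (h.2.1 hx).1), h.1.2, h.2.2⟩
  · intro A _
    exact sup_inf_sdiff A X
  · rintro ⟨B, C⟩ h
    simp only [coe_product, Set.mem_prod, mem_coe, mem_powersetCard, subset_iff, mem_inter,
      mem_sdiff] at h
    simp only [Prod.mk.injEq]
    constructor <;> ext x <;> grind

lemma card_filter_powerset_card_inter_card_sdiff_eq_zchoose (U X : Finset α) (c d : ℤ) :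
    (#{A ∈ U.powerset | (#(A ∩ X) : ℤ) = c ∧ (#(A \ X) : ℤ) = d} : ℝ)
      = zchoose #(U ∩ X) c * zchoose #(U \ X) d := by
  by_cases hcd : 0 ≤ c ∧ 0 ≤ d
  · lift c to ℕ using hcd.1
    lift d to ℕ using hcd.2
    simp only [Nat.cast_inj, zchoose_natCast, card_filter_powerset_card_inter_card_sdiff,
      Nat.cast_mul]
  · rw [filter_false_of_mem fun A _ h => by omega, card_empty, Nat.cast_zero]
    rcases not_and_or.1 hcd with hc | hd
    · rw [zchoose_of_neg (b := c) (by omega), zero_mul]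
    · rw [zchoose_of_neg (b := d) (by omega), mul_zero]

lemma card_filter_superset [Fintype α] (Z : Finset α) (P : Finset α → Prop) [DecidablePred P] :
    #{Y | Z ⊆ Y ∧ P Y} = #{A ∈ Zᶜ.powerset | P (Z ∪ A)} := by
  refine card_nbij' (· \ Z) (Z ∪ ·) ?_ ?_ ?_ ?_
  · intro Y hY
    simp only [coe_filter, mem_univ, true_and, Set.mem_ofPred, mem_powerset] at hY ⊢
    refine ⟨fun x hx => by simp_all, by rw [union_sdiff_of_subset hY.1]; exact hY.2⟩
  · intro A hA
    simp only [coe_filter, mem_univ, true_and, Set.mem_ofPred, mem_powerset] at hA ⊢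
    exact ⟨subset_union_left, hA.2⟩
  · intro Y hY
    simp only [coe_filter, mem_univ, true_and, Set.mem_ofPred] at hY
    exact union_sdiff_of_subset hY.1
  · intro A hA
    simp only [coe_filter, mem_powerset, Set.mem_ofPred] at hA
    exact union_sdiff_cancel_left (disjoint_right.2 fun x hx => by simpa using hA.1 hx)

lemma card_filter_superset_eq_zchoose [Fintype α] (X Z : Finset α) (j t : ℕ) :
    (#{Y | Z ⊆ Y ∧ #Y = j ∧ #(X ∩ Y) = t} : ℝ)
      = zchoose #(X \ Z) ((t : ℤ) - #(X ∩ Z))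
        * zchoose #(X ∪ Z)ᶜ ((j : ℤ) - #Z - t + #(X ∩ Z)) := by
  have hsplit : ∀ A ∈ Zᶜ.powerset, (#(Z ∪ A) = j ∧ #(X ∩ (Z ∪ A)) = t ↔
      (#(A ∩ X) : ℤ) = t - #(X ∩ Z) ∧ (#(A \ X) : ℤ) = j - #Z - t + #(X ∩ Z)) := by
    intro A hA
    have hZA : Disjoint Z A := disjoint_right.2 fun x hx => by simpa using mem_powerset.1 hA hx
    have hXZA : Disjoint (X ∩ Z) (X ∩ A) :=
      disjoint_of_subset_left inter_subset_right (disjoint_of_subset_right inter_subset_right hZA)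
    rw [card_union_of_disjoint hZA, inter_union_distrib_left, card_union_of_disjoint hXZA,
      inter_comm X A, ← card_inter_add_card_sdiff A X]
    omega
  have hin : Zᶜ ∩ X = X \ Z := by ext; simp [and_comm]
  have hout : Zᶜ \ X = (X ∪ Z)ᶜ := by ext; simp [and_comm]
  rw [card_filter_superset Z (fun Y => #Y = j ∧ #(X ∩ Y) = t), filter_congr hsplit,
    card_filter_powerset_card_inter_card_sdiff_eq_zchoose, hin, hout]

lemma card_filter_subset_eq_choose [Fintype α] (X Z : Finset α) {m r : ℕ} (hr : r ≤ m) :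
    #{W | W ⊆ Z ∧ #W = m ∧ #(X ∩ W) = r} = (#(Z ∩ X)).choose r * (#(Z \ X)).choose (m - r) := by
  rw [← filter_filter, filter_subset_univ, ← card_filter_powerset_card_inter_card_sdiff]
  refine congrArg card (filter_congr fun W _ => ?_)
  rw [inter_comm X W, ← card_inter_add_card_sdiff W X]
  omega

end Counting

section InterSum

variable {α : Type*} [DecidableEq α] [Fintype α]

noncomputable def interSum (k : ℕ) (b : Finset α → ℝ) (X : Finset α) (s : ℕ) : ℝ :=
  ∑ Z with #Z = k ∧ #(X ∩ Z) = s, b Z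

lemma mulVec_apply_eq_sum_interSum {A : Matrix (Finset α) (Finset α) ℝ} {X : Finset α} {k : ℕ}
    (g : ℕ → ℝ) (hA : ∀ Z, A X Z = if #Z = k then g #(X ∩ Z) else 0) (b : Finset α → ℝ) :
    (A *ᵥ b) X = ∑ s ∈ range (k + 1), g s * interSum k b X s := by
  have hmaps : ∀ Z ∈ ({Z | #Z = k} : Finset (Finset α)), #(X ∩ Z) ∈ range (k + 1) := fun Z hZ =>
    mem_range_succ_iff.2 <| (mem_filter.1 hZ).2 ▸ card_le_card inter_subset_right
  simp only [mulVec, dotProduct, hA, ite_mul, zero_mul]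
  rw [← sum_filter, ← sum_fiberwise_of_maps_to hmaps]
  refine sum_congr rfl fun s _ => ?_
  rw [interSum, mul_sum, filter_filter]
  exact sum_congr rfl fun Z hZ => by rw [(mem_filter.1 hZ).2.2]

end InterSum

lemma eq_neg_one_pow_mul_choose_of_recurrence {f : ℕ → ℝ} {k : ℕ}
    (hf : ∀ r < k, ((k - r : ℕ) : ℝ) * f r + (r + 1) * f (r + 1) = 0) {s : ℕ} (hs : s ≤ k) :
    f s = (-1) ^ (k - s) * k.choose s * f k := by
  induction hs using Nat.decreasingInduction with
  | self => simp
  | of_succ s hs ih =>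
    obtain ⟨d, hd⟩ : ∃ d, k - s = d + 1 := ⟨k - s - 1, by omega⟩
    have hchoose : (k.choose (s + 1) : ℝ) * (s + 1) = k.choose s * (k - s : ℕ) := by
      exact_mod_cast Nat.choose_succ_right_eq k s
    have hrec := hf s hs
    rw [ih, show k - (s + 1) = d by omega] at hrec
    rw [hd] at hrec hchoose ⊢
    have hd0 : ((d + 1 : ℕ) : ℝ) ≠ 0 := by positivity
    apply mul_left_cancel₀ hd0
    linear_combination hrec - (-1) ^ d * f k * hchoose

lemma sum_range_succ_eq_sum_range_succ_of_eq_zero {M : Type*} [AddCommMonoid M] {f : ℕ → M}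
    {a b : ℕ} (ha : ∀ p, a < p → f p = 0) (hb : ∀ p, b < p → f p = 0) :
    ∑ p ∈ range (a + 1), f p = ∑ p ∈ range (b + 1), f p := by
  have key : ∀ c d, (∀ p, c < p → f p = 0) → c ≤ d →
      ∑ p ∈ range (c + 1), f p = ∑ p ∈ range (d + 1), f p := fun c d hc hcd =>
    sum_subset (range_subset_range.2 (by omega)) fun p _ hp => hc p (by simpa using hp)
  rcases le_total a b with hab | hab
  exacts [key a b ha hab, (key b a hb hab).symm]

noncomputable def betaTerm (n i j k t p : ℕ) : ℝ :=
  (-1 : ℝ) ^ ((k : ℤ) - (p : ℤ)) * zchoose (k : ℤ) (p : ℤ) * zchoose ((i : ℤ) - p) ((t : ℤ) - p) *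
    zchoose ((n : ℤ) + p - i - k) ((n : ℤ) + t - i - j)

section Mmat

variable {n : ℕ}

lemma Mmat_natCast_apply (i j t : ℕ) (X Y : Finset (Fin n)) :
    Mmat n i j t X Y = if #X = i ∧ #Y = j ∧ #(X ∩ Y) = t then 1 else 0 := by
  simp only [Mmat, of_apply, Nat.cast_inj]

lemma Mmat_apply_of_card {i j t : ℕ} {X : Finset (Fin n)} (hX : #X = i) (Y : Finset (Fin n)) :
    Mmat n i j t X Y = if #Y = j then (if #(X ∩ Y) = t then 1 else 0) else 0 := by
  simp only [Mmat_natCast_apply, hX, true_and, ite_and]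

lemma Mmat_mulVec_apply_of_card_ne {i j t : ℕ} {X : Finset (Fin n)} (hX : #X ≠ i)
    (v : Finset (Fin n) → ℝ) : (Mmat n i j t *ᵥ v) X = 0 := by
  simp [mulVec, dotProduct, Mmat_natCast_apply, hX]

lemma Mmat_mul_Mmat_apply_of_card {i j t k l : ℕ} {X : Finset (Fin n)} (hX : #X = i)
    (Z : Finset (Fin n)) : (Mmat n i j t * Mmat n j k l) X Z
      = if #Z = k then (#{Y | #Y = j ∧ #(X ∩ Y) = t ∧ #(Y ∩ Z) = l} : ℝ) else 0 := by
  simp only [mul_apply, Mmat_natCast_apply, hX, true_and, ite_zero_mul_ite_zero, mul_one]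
  split_ifs with hZ
  · rw [← sum_boole]
    exact sum_congr rfl fun Y _ => if_congr (by simp only [hZ]; tauto) rfl rfl
  · simp [hZ]

lemma Mmat_mul_Mmat_superset_apply_of_card {i j t k : ℕ} {X : Finset (Fin n)} (hX : #X = i)
    (Z : Finset (Fin n)) : (Mmat n i j t * Mmat n j k k) X Z
      = if #Z = k then zchoose ((i : ℤ) - #(X ∩ Z)) ((t : ℤ) - #(X ∩ Z))
          * zchoose ((n : ℤ) + #(X ∩ Z) - i - k) ((n : ℤ) + t - i - j) else 0 := by
  rw [Mmat_mul_Mmat_apply_of_card hX]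
  split_ifs with hZ
  · have hsub : ∀ Y : Finset (Fin n), (#Y = j ∧ #(X ∩ Y) = t ∧ #(Y ∩ Z) = k) ↔
        (Z ⊆ Y ∧ #Y = j ∧ #(X ∩ Y) = t) := fun Y => by
      rw [← hZ, card_inter_eq_card_right_iff]; tauto
    have hdiff : (#(X \ Z) : ℤ) = i - #(X ∩ Z) := by
      rw [← hX, ← card_sdiff_add_card_inter X Z]; push_cast; ring
    have hout : (#(X ∪ Z)ᶜ : ℤ) = n + #(X ∩ Z) - i - k := by
      have := card_union_add_card_inter X Z
      have := card_le_univ (X ∪ Z)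
      rw [card_compl, Fintype.card_fin]
      simp only [Fintype.card_fin] at this
      omega
    rw [filter_congr fun Y _ => hsub Y, card_filter_superset_eq_zchoose, hdiff, hout, hZ,
      ← zchoose_sub _ ((n : ℤ) + t - i - j)]
    congr 2
    ring
  · rfl

lemma Mmat_mul_Mmat_subset_apply {m r : ℕ} (hr : r ≤ m) (X Z : Finset (Fin n)) :
    (Mmat n #X m r * Mmat n m (m + 1 : ℕ) m) X Z
      = if #Z = m + 1 then (((#(X ∩ Z)).choose r * (m + 1 - #(X ∩ Z)).choose (m - r) : ℕ) : ℝ)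
        else 0 := by
  rw [Mmat_mul_Mmat_apply_of_card rfl]
  split_ifs with hZ
  · have hsub : ∀ W : Finset (Fin n), (#W = m ∧ #(X ∩ W) = r ∧ #(W ∩ Z) = m) ↔
        (W ⊆ Z ∧ #W = m ∧ #(X ∩ W) = r) := fun W => by
      rw [inter_comm W Z]
      constructor
      · rintro ⟨hW, hXW, hWZ⟩
        exact ⟨card_inter_eq_card_right_iff.1 (hW ▸ hWZ), hW, hXW⟩
      · rintro ⟨hWZ, hW, hXW⟩
        exact ⟨hW, hXW, hW ▸ card_inter_eq_card_right_iff.2 hWZ⟩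
    have hdiff : #(Z \ X) = m + 1 - #(X ∩ Z) := by
      rw [← hZ, ← card_sdiff_add_card_inter Z X, inter_comm]; omega
    rw [filter_congr fun W _ => hsub W, card_filter_subset_eq_choose X Z hr, inter_comm Z X, hdiff]
  · rfl

end Mmat

section Lset

variable {n k : ℕ} {b : Finset (Fin n) → ℝ}

lemma interSum_recurrence (hb : b ∈ Lset n k) (X : Finset (Fin n)) {r : ℕ} (hr : r < k) :
    ((k - r : ℕ) : ℝ) * interSum k b X r + (r + 1) * interSum k b X (r + 1) = 0 := by
  obtain ⟨m, rfl⟩ : ∃ m, k = m + 1 := ⟨k - 1, by omega⟩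
  have hker : Mmat n m (m + 1 : ℕ) m *ᵥ b = 0 := by simpa using hb.1
  have hrm : r ≤ m := by omega
  have h0 := congrFun (congrArg (Mmat n #X m r *ᵥ ·) hker) X
  rw [mulVec_zero, mulVec_mulVec,
    mulVec_apply_eq_sum_interSum (fun s => ((s.choose r * (m + 1 - s).choose (m - r) : ℕ) : ℝ))
      (Mmat_mul_Mmat_subset_apply hrm X), Pi.zero_apply] at h0
  rw [← h0, sum_eq_add_of_mem r (r + 1) (mem_range.2 (by omega)) (mem_range.2 (by omega))
    (by omega)]
  · rw [Nat.choose_self, Nat.choose_succ_self_right, show m + 1 - (r + 1) = m - r by omega,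
      Nat.choose_self, show m + 1 - r = m - r + 1 by omega, Nat.choose_succ_self_right]
    push_cast; ring
  · intro s hsm hs
    rw [mem_range] at hsm
    rcases lt_or_gt_of_ne hs.1 with hsr | hsr
    · rw [Nat.choose_eq_zero_of_lt hsr, zero_mul, Nat.cast_zero, zero_mul]
    · rw [Nat.choose_eq_zero_of_lt (n := m + 1 - s) (by omega), mul_zero, Nat.cast_zero, zero_mul]

lemma interSum_eq (hb : b ∈ Lset n k) (X : Finset (Fin n)) {s : ℕ} (hs : s ≤ k) :
    interSum k b X s = (-1) ^ (k - s) * k.choose s * interSum k b X k :=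
  eq_neg_one_pow_mul_choose_of_recurrence (fun _ hr => interSum_recurrence hb X hr) hs

lemma Mmat_mul_Mmat_mulVec_of_mem_Lset (hb : b ∈ Lset n k) (i j t : ℕ) :
    (Mmat n i j t * Mmat n j k k) *ᵥ b
      = (∑ p ∈ range (t + 1), betaTerm n i j k t p) • (Mmat n i k k *ᵥ b) := by
  funext X
  rw [Pi.smul_apply, smul_eq_mul]
  by_cases hX : #X = i
  · rw [mulVec_apply_eq_sum_interSum (fun s => zchoose ((i : ℤ) - s) ((t : ℤ) - s) *
        zchoose ((n : ℤ) + s - i - k) ((n : ℤ) + t - i - j))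
        (Mmat_mul_Mmat_superset_apply_of_card hX),
      mulVec_apply_eq_sum_interSum (fun s => if s = k then 1 else 0) (Mmat_apply_of_card hX)]
    simp only [ite_mul, one_mul, zero_mul, sum_ite_eq', mem_range, lt_add_one, if_true]
    calc _ = ∑ s ∈ range (k + 1), betaTerm n i j k t s * interSum k b X k := by
          refine sum_congr rfl fun s hs => ?_
          have hsk := mem_range_succ_iff.1 hs
          rw [interSum_eq hb X hsk, betaTerm, zchoose_natCast,
            show (k : ℤ) - s = (k - s : ℕ) by push_cast [hsk]; ring, zpow_natCast]
          ring
      _ = _ := by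
          rw [← sum_mul, sum_range_succ_eq_sum_range_succ_of_eq_zero]
          · intro p hp
            rw [betaTerm, zchoose_natCast, Nat.choose_eq_zero_of_lt hp]
            ring
          · intro p hp
            rw [betaTerm, zchoose_of_neg (a := (i : ℤ) - p) (show (t : ℤ) - p < 0 by omega)]
            ring
  · rw [← mulVec_mulVec, Mmat_mulVec_apply_of_card_ne hX, Mmat_mulVec_apply_of_card_ne hX,
      mul_zero]

end Lset

theorem statement14_general (n : ℕ) (i j k t : ℕ)
    (b : Finset (Fin n) → ℝ) (hb : b ∈ Lset n k) :
    zchoose ((n : ℤ) - 2 * k) ((i : ℤ) - k) •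
        ((Mmat n (i : ℤ) (j : ℤ) (t : ℤ) * Mmat n (j : ℤ) (k : ℤ) (k : ℤ)) *ᵥ b)
      = betaCoef n i j k t • (Mmat n (i : ℤ) (k : ℤ) (k : ℤ) *ᵥ b) := by
  rw [Mmat_mul_Mmat_mulVec_of_mem_Lset hb, smul_smul]
  rfl

/-- for `i, j, k, t ∈ {0,…,n}` with `k ≤ ⌊n/2⌋` and `b ∈ L_k`,
`C(n−2k, i−k) · M_{i,j}^t · M_{j,k}^k · b = β_{i,j,k}^t · M_{i,k}^k · b`. -/
theorem statement14 (n : ℕ) (hn : 1 ≤ n) (i j k t : ℕ)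
    (hi : i ≤ n) (hj : j ≤ n) (ht : t ≤ n) (hkn : k ≤ n) (hk : k ≤ n / 2)
    (b : Finset (Fin n) → ℝ) (hb : b ∈ Lset n k) :
    zchoose ((n : ℤ) - 2 * k) ((i : ℤ) - k) •
        ((Mmat n (i : ℤ) (j : ℤ) (t : ℤ) * Mmat n (j : ℤ) (k : ℤ) (k : ℤ)) *ᵥ b)
      = betaCoef n i j k t • (Mmat n (i : ℤ) (k : ℤ) (k : ℤ) *ᵥ b) :=
  statement14_general n i j k t b hb
end
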